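/- arXiv:1712.07880 — 3 statements merged into one kernel-verified Lean document; each statement's English description precedes it below -/
import Mathlib

section
/- Let T be a join tree of an acyclic hypergraph H, and suppose H is extended by adding a vertex y to every edge e that contains a fixed nonempty set X of vertices with y in some edge e0 containing X union {y} (and y already appears together with X in e0). Then the tree T with each edge so extended is a join tree of the extended hypergraph. In particular, extending every edge containing X by y preserves acyclicity. -/
/-!
Extending the edges by `y` does not change which edges contain a vertex `v ≠ y`, so the running
intersection property only has to be checked at `y`. The extended edges containing `y` are the
old edges containing `y` together with the edges containing `X`. In a tree the latter form an
intersection of subtrees, one for each vertex of `X`, hence a subtree; both subtrees contain `e₀`,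
so their union is again a subtree.
-/
structure SetHypergraph (V : Type*) where
  edges : Set (Set V)
  nonempty_of_mem : ∀ e ∈ edges, e.Nonempty

namespace SetHypergraph

variable {V : Type*}

/-- The vertex set of a hypergraph: all vertices occurring in some edge. -/
def vertexSet (H : SetHypergraph V) : Set V := ⋃ e ∈ H.edges, e

/-- Two vertices are neighbors if they appear together in some edge. -/
def Neighbors (H : SetHypergraph V) (u v : V) : Prop := ∃ e ∈ H.edges, u ∈ e ∧ v ∈ e

/-- A clique: a set of pairwise neighboring vertices. -/
def IsClique (H : SetHypergraph V) (C : Set V) : Prop := ∀ u ∈ C, ∀ v ∈ C, H.Neighbors u v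

/-- Conformal: every clique is contained in some edge. -/
def Conformal (H : SetHypergraph V) : Prop := ∀ C : Set V, H.IsClique C → ∃ e ∈ H.edges, C ⊆ e

/-- A chordless cycle (x_1, ..., x_n), n ≥ 3, of distinct vertices: the neighboring
pairs among them are exactly the consecutive (cyclically) ones. -/
def HasChordlessCycle (H : SetHypergraph V) : Prop :=
  ∃ (n : ℕ) (x : Fin (n + 3) → V), Function.Injective x ∧
    (∀ i, x i ∈ H.vertexSet) ∧
    ∀ i j : Fin (n + 3), i ≠ j → (H.Neighbors (x i) (x j) ↔ (j = i + 1 ∨ i = j + 1))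

/-- A join tree: a tree on the edges of `H` such that for each vertex the set of
edges containing it induces a connected subtree (running intersection property). -/
def IsJoinTree (H : SetHypergraph V) (T : SimpleGraph ↥H.edges) : Prop :=
  T.IsTree ∧ ∀ v ∈ H.vertexSet, (T.induce {e : ↥H.edges | v ∈ e.1}).Connected

/-- A hypergraph is acyclic if it admits a join tree. -/
def Acyclic (H : SetHypergraph V) : Prop := ∃ T : SimpleGraph ↥H.edges, H.IsJoinTree T

end SetHypergraph

namespace SimpleGraph

variable {α : Type*} {G : SimpleGraph α}

lemma IsAcyclic.support_subset_of_preconnected_induce (hG : G.IsAcyclic) {s : Set α}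
    (hs : (G.induce s).Preconnected) {a b : α} (ha : a ∈ s) (hb : b ∈ s) (p : G.Path a b) :
    {v | v ∈ p.1.support} ⊆ s := by
  classical
  obtain ⟨w⟩ := hs ⟨a, ha⟩ ⟨b, hb⟩
  obtain rfl : (w.map (Embedding.induce s).toHom).toPath = p :=
    (hG.subsingleton_path a b).elim _ _
  intro v hv
  have hv' : v ∈ (w.map (Embedding.induce s).toHom).support :=
    Walk.support_toPath_subset_support _ hv
  obtain ⟨u, -, rfl⟩ := List.mem_map.1 (by rwa [Walk.support_map] at hv')
  exact u.2

lemma IsTree.connected_induce_iInter (hG : G.IsTree) {ι : Sort*} {s : ι → Set α}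
    (hs : ∀ i, (G.induce (s i)).Preconnected) (hne : (⋂ i, s i).Nonempty) :
    (G.induce (⋂ i, s i)).Connected := by
  classical
  obtain ⟨u, hu⟩ := hne
  refine induce_connected_of_patches u hu fun {v} hv => ?_
  let p : G.Path u v := (hG.connected.preconnected u v).some.toPath
  refine ⟨{w | w ∈ p.1.support}, ?_, p.1.start_mem_support, p.1.end_mem_support,
    p.1.connected_induce_support.preconnected _ _⟩
  exact Set.subset_iInter fun i => hG.isAcyclic.support_subset_of_preconnected_induce (hs i)
    (Set.mem_iInter.1 hu i) (Set.mem_iInter.1 hv i) p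

end SimpleGraph

namespace SetHypergraph

open SimpleGraph

variable {V : Type*}

lemma isJoinTree_map_equiv {H H' : SetHypergraph V} {T : SimpleGraph H.edges} (hT : T.IsTree)
    (φ : H.edges ≃ H'.edges)
    (hconn : ∀ v ∈ H'.vertexSet, (T.induce {e | v ∈ (φ e).1}).Connected) :
    H'.IsJoinTree (T.map φ.toEmbedding) :=
  ⟨(Iso.map φ T).isTree_iff.1 hT, fun v hv =>
    ((Iso.map φ T).induce
      (φ.bijective.bijOn_preimage (t := {g : H'.edges | v ∈ g.1}))).connected_iff.1
        (hconn v hv)⟩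

lemma IsJoinTree.connected_induce_setOf_subset {H : SetHypergraph V} {T : SimpleGraph H.edges}
    (hT : H.IsJoinTree T) {X : Set V} {e₀ : Set V} (he₀ : e₀ ∈ H.edges) (hX : X ⊆ e₀) :
    (T.induce {e : H.edges | X ⊆ e.1}).Connected := by
  have hsub : {e : H.edges | X ⊆ e.1} = ⋂ x : X, {e : H.edges | x.1 ∈ e.1} := by
    ext e
    simp [Set.subset_def]
  rw [hsub]
  refine hT.1.connected_induce_iInter (fun x => (hT.2 x ?_).preconnected) ?_
  · exact Set.mem_biUnion he₀ (hX x.2)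
  · exact ⟨⟨e₀, he₀⟩, Set.mem_iInter.2 fun x => hX x.2⟩

open Classical in
def extendEdge (X : Set V) (y : V) (e : Set V) : Set V := if X ⊆ e then e ∪ {y} else e

lemma mem_extendEdge_of_ne {X : Set V} {y v : V} (hv : v ≠ y) (e : Set V) :
    v ∈ extendEdge X y e ↔ v ∈ e := by
  by_cases h : X ⊆ e <;> simp [extendEdge, h, hv]

lemma mem_extendEdge_self (X : Set V) (y : V) (e : Set V) :
    y ∈ extendEdge X y e ↔ y ∈ e ∨ X ⊆ e := by
  by_cases h : X ⊆ e <;> simp [extendEdge, h]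

lemma IsJoinTree.connected_induce_setOf_self_mem_extendEdge {H : SetHypergraph V}
    {T : SimpleGraph H.edges} (hT : H.IsJoinTree T) {X : Set V} {y : V} {e₀ : Set V}
    (he₀ : e₀ ∈ H.edges) (hXy : X ∪ {y} ⊆ e₀) :
    (T.induce {e : H.edges | y ∈ extendEdge X y e.1}).Connected := by
  have hy : y ∈ e₀ := hXy (Or.inr rfl)
  have hX : X ⊆ e₀ := fun x hx => hXy (Or.inl hx)
  rw [show {e : H.edges | y ∈ extendEdge X y e.1} = {e | y ∈ e.1} ∪ {e | X ⊆ e.1} from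
    Set.ext fun e => mem_extendEdge_self X y e.1]
  exact induce_union_connected (hT.2 y (Set.mem_biUnion he₀ hy)).preconnected
    (hT.connected_induce_setOf_subset he₀ hX).preconnected ⟨⟨e₀, he₀⟩, hy, hX⟩

lemma IsJoinTree.connected_induce_setOf_mem_extendEdge {H : SetHypergraph V}
    {T : SimpleGraph H.edges} (hT : H.IsJoinTree T) {X : Set V} {y : V} {e₀ : Set V}
    (he₀ : e₀ ∈ H.edges) (hXy : X ∪ {y} ⊆ e₀) {v : V}
    (hv : v ∈ ⋃ e ∈ H.edges, extendEdge X y e) :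
    (T.induce {e : H.edges | v ∈ extendEdge X y e.1}).Connected := by
  obtain rfl | hvy := eq_or_ne v y
  · exact hT.connected_induce_setOf_self_mem_extendEdge he₀ hXy
  rw [show {e : H.edges | v ∈ extendEdge X y e.1} = {e | v ∈ e.1} from
    Set.ext fun e => mem_extendEdge_of_ne hvy e.1]
  obtain ⟨e, he, hve⟩ := Set.mem_iUnion₂.1 hv
  exact hT.2 v (Set.mem_biUnion he ((mem_extendEdge_of_ne hvy e).1 hve))

end SetHypergraph

open SetHypergraph SimpleGraph

open Classical in
theorem extended_tree_is_joinTree_general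
    {V : Type*} (H : SetHypergraph V)
    (T : SimpleGraph ↥H.edges) (hT : H.IsJoinTree T)
    (X : Set V) (y : V)
    (e₀ : Set V) (he₀ : e₀ ∈ H.edges) (hXy : X ∪ {y} ⊆ e₀)
    (H' : SetHypergraph V)
    (hH' : H'.edges = (fun e => if X ⊆ e then e ∪ {y} else e) '' H.edges)
    (hinj : Set.InjOn (fun e => if X ⊆ e then e ∪ {y} else e) H.edges) :
    (∃ T' : SimpleGraph ↥H'.edges,
      (∀ f g : ↥H'.edges, T'.Adj f g ↔ ∃ e₁ e₂ : ↥H.edges, T.Adj e₁ e₂ ∧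
        f.1 = (if X ⊆ e₁.1 then e₁.1 ∪ {y} else e₁.1) ∧
        g.1 = (if X ⊆ e₂.1 then e₂.1 ∪ {y} else e₂.1)) ∧
      H'.IsJoinTree T') ∧ H'.Acyclic := by
  have hbij : Set.BijOn (extendEdge X y) H.edges H'.edges := hH' ▸ hinj.bijOn_image
  let φ : H.edges ≃ H'.edges := hbij.equiv (extendEdge X y)
  have hJT : H'.IsJoinTree (T.map φ.toEmbedding) := by
    refine isJoinTree_map_equiv hT.1 φ fun v hv =>
      hT.connected_induce_setOf_mem_extendEdge he₀ hXy ?_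
    rwa [vertexSet, hH', Set.biUnion_image] at hv
  refine ⟨⟨T.map φ.toEmbedding, fun f g => ?_, hJT⟩, _, hJT⟩
  rw [map_adj]
  refine exists₂_congr fun e₁ e₂ => and_congr_right' (and_congr ?_ ?_) <;>
    exact Subtype.ext_iff.trans eq_comm

open Classical in
theorem extended_tree_is_joinTree
    {V : Type*} (H : SetHypergraph V)
    (T : SimpleGraph ↥H.edges) (hT : H.IsJoinTree T)
    (X : Set V) (hX : X.Nonempty) (y : V)
    (e₀ : Set V) (he₀ : e₀ ∈ H.edges) (hXy : X ∪ {y} ⊆ e₀)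
    (H' : SetHypergraph V)
    (hH' : H'.edges = (fun e => if X ⊆ e then e ∪ {y} else e) '' H.edges)
    (hinj : Set.InjOn (fun e => if X ⊆ e then e ∪ {y} else e) H.edges) :
    (∃ T' : SimpleGraph ↥H'.edges,
      (∀ f g : ↥H'.edges, T'.Adj f g ↔ ∃ e₁ e₂ : ↥H.edges, T.Adj e₁ e₂ ∧
        f.1 = (if X ⊆ e₁.1 then e₁.1 ∪ {y} else e₁.1) ∧
        g.1 = (if X ⊆ e₂.1 then e₂.1 ∪ {y} else e₂.1)) ∧
      H'.IsJoinTree T') ∧ H'.Acyclic :=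
  extended_tree_is_joinTree_general H T hT X y e₀ he₀ hXy H' hH' hinj
end

section
/- Let H be an acyclic hypergraph with join tree T and head-path (x, z_1, ..., z_k, y), and let P be the path in T from e(x,z_1) to e(z_k,y). Define sep_x as the first node on P not containing x, and sep_y as the last node on P not containing y. Define T_x as the nodes of T whose tree-path to e(x,z_1) avoids sep_x, and T_y as the nodes whose tree-path to e(z_k,y) avoids sep_y. Then T_x and T_y are disjoint. -/
structure Hypergraph' (V : Type*) where
  edges : Set (Set V)
  nonempty_of_mem : ∀ e ∈ edges, e.Nonempty

namespace Hypergraph'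

variable {V : Type*}

/-- The vertex set of a hypergraph: all vertices occurring in some edge. -/
def vertexSet (H : Hypergraph' V) : Set V := ⋃ e ∈ H.edges, e

/-- Two vertices are neighbors if they appear together in some edge. -/
def Neighbors (H : Hypergraph' V) (u v : V) : Prop := ∃ e ∈ H.edges, u ∈ e ∧ v ∈ e

/-- A clique: a set of pairwise neighboring vertices. -/
def IsClique (H : Hypergraph' V) (C : Set V) : Prop := ∀ u ∈ C, ∀ v ∈ C, H.Neighbors u v

/-- Conformal: every clique is contained in some edge. -/
def Conformal (H : Hypergraph' V) : Prop := ∀ C : Set V, H.IsClique C → ∃ e ∈ H.edges, C ⊆ e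

/-- A chordless cycle (x_1, ..., x_n), n ≥ 3, of distinct vertices: the neighboring
pairs among them are exactly the consecutive (cyclically) ones. -/
def HasChordlessCycle (H : Hypergraph' V) : Prop :=
  ∃ (n : ℕ) (x : Fin (n + 3) → V), Function.Injective x ∧
    (∀ i, x i ∈ H.vertexSet) ∧
    ∀ i j : Fin (n + 3), i ≠ j → (H.Neighbors (x i) (x j) ↔ (j = i + 1 ∨ i = j + 1))

/-- A join tree: a tree on the edges of `H` such that for each vertex the set of
edges containing it induces a connected subtree (running intersection property). -/
def IsJoinTree (H : Hypergraph' V) (T : SimpleGraph ↥H.edges) : Prop :=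
  T.IsTree ∧ ∀ v ∈ H.vertexSet, (T.induce {e : ↥H.edges | v ∈ e.1}).Connected

/-- A hypergraph is acyclic if it admits a join tree. -/
def Acyclic (H : Hypergraph' V) : Prop := ∃ T : SimpleGraph ↥H.edges, H.IsJoinTree T

end Hypergraph'
/-- A head-path `(x, z_1, ..., z_k, y)`, `k ≥ 1`, for a hypergraph `H` with free
vertices `F`: a chordless path of distinct vertices, whose endpoints `x = v 0`
and `y = v (k+1)` are free and whose middle vertices are not free; consecutive
vertices co-occur in some edge, non-consecutive ones do not. -/
structure HeadPath {V : Type*} (H : Hypergraph' V) (F : Set V) (k : ℕ) where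
  v : Fin (k + 2) → V
  kpos : 1 ≤ k
  inj : Function.Injective v
  first_free : v 0 ∈ F
  last_free : v (Fin.last (k + 1)) ∈ F
  mid_not_free : ∀ i : Fin (k + 2), i ≠ 0 → i ≠ Fin.last (k + 1) → v i ∉ F
  consec : ∀ i : Fin (k + 1), H.Neighbors (v i.castSucc) (v i.succ)
  chordless : ∀ i j : Fin (k + 2), (i : ℕ) + 1 < (j : ℕ) → ¬ H.Neighbors (v i) (v j)

/-! In a tree, the paths from a node `n` to the two ends of `P` cover an initial and a final
segment of `P` which share a vertex. If `n` were in both `T_x` and `T_y`, then `sep_x` would lie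
only on the final segment and `sep_y` only on the initial one, so some node of `P` lies strictly
between `sep_y` and `sep_x`. By the choice of `sep_x` and `sep_y` that node contains both `x`
and `y`, which the chordless head-path forbids. -/

lemma HeadPath.not_neighbors_first_last {V : Type*} {H : Hypergraph' V} {F : Set V} {k : ℕ}
    (hp : HeadPath H F k) : ¬ H.Neighbors (hp.v 0) (hp.v (Fin.last (k + 1))) :=
  hp.chordless 0 (Fin.last (k + 1)) <| by
    simp only [Fin.val_zero, Fin.val_last]
    have := hp.kpos
    omega

namespace SimpleGraph

variable {V : Type*} {G : SimpleGraph V}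

lemma Walk.getD_support {u v : V} (p : G.Walk u v) {i : ℕ} (hi : i < p.support.length) (d : V) :
    p.support.getD i d = p.getVert i := by
  rw [List.getD_eq_getElem _ d hi, p.support_getElem_eq_getVert]

namespace IsAcyclic

lemma eq_of_isPath (hG : G.IsAcyclic) {u v : V} {p q : G.Walk u v} (hp : p.IsPath)
    (hq : q.IsPath) : p = q :=
  congrArg Subtype.val ((hG.subsingleton_path u v).elim ⟨p, hp⟩ ⟨q, hq⟩)

lemma mem_support_or_mem_support_of_isPath [DecidableEq V] (hG : G.IsAcyclic) {a b n z : V}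
    {P : G.Walk a b} (hP : P.IsPath) (q₁ : G.Walk n a) (q₂ : G.Walk n b) (hz : z ∈ P.support) :
    z ∈ q₁.support ∨ z ∈ q₂.support := by
  rw [hG.eq_of_isPath hP (q₁.reverse.append q₂).bypass_isPath] at hz
  simpa [Walk.mem_support_append_iff] using
    (q₁.reverse.append q₂).support_bypass_subset_support hz

lemma getVert_mem_support_of_le [DecidableEq V] (hG : G.IsAcyclic) {a b n : V} {P : G.Walk a b}
    (hP : P.IsPath) {q : G.Walk n b} (hq : q.IsPath) {i j : ℕ} (hij : i ≤ j)
    (hi : P.getVert i ∈ q.support) : P.getVert j ∈ q.support := by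
  have hdrop : q.dropUntil _ hi = P.drop i := hG.eq_of_isPath (hq.dropUntil hi) (hP.drop i)
  have hj : P.getVert j = (P.drop i).getVert (j - i) := by
    rw [Walk.drop_getVert, Nat.add_sub_cancel' hij]
  rw [hj, ← hdrop]
  exact q.support_dropUntil_subset_support hi (Walk.getVert_mem_support _ _)

lemma mem_support_or_mem_support_of_adj (hG : G.IsAcyclic) {n u v : V} (h : G.Adj u v)
    {p : G.Walk n u} (hp : p.IsPath) {q : G.Walk n v} (hq : q.IsPath) :
    v ∈ p.support ∨ u ∈ q.support := by
  by_contra! hc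
  have hpq : p.concat h = q := hG.eq_of_isPath (hp.concat hc.1 h) hq
  exact hc.2 (hpq ▸ p.support_subset_support_concat h p.end_mem_support)

lemma getVert_mem_support_or_getVert_mem_support [DecidableEq V] (hG : G.IsAcyclic)
    {a b n : V} {P : G.Walk a b} (hP : P.IsPath) {q₁ : G.Walk n a} (hq₁ : q₁.IsPath)
    {q₂ : G.Walk n b} (hq₂ : q₂.IsPath) {i j : ℕ} (hij : i ≤ j + 1) :
    P.getVert i ∈ q₁.support ∨ P.getVert j ∈ q₂.support := by
  by_contra! ⟨hi₁, hj₂⟩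
  have hi₂ := (hG.mem_support_or_mem_support_of_isPath hP q₁ q₂
    (P.getVert_mem_support i)).resolve_left hi₁
  have hj₁ := (hG.mem_support_or_mem_support_of_isPath hP q₁ q₂
    (P.getVert_mem_support j)).resolve_right hj₂
  rcases le_or_gt i j with hle | hlt
  · exact hj₂ (hG.getVert_mem_support_of_le hP hq₂ hle hi₂)
  obtain rfl : i = j + 1 := by omega
  rcases Nat.lt_or_ge j P.length with hj | hj
  · rcases hG.mem_support_or_mem_support_of_adj (P.adj_getVert_succ hj) (hq₁.takeUntil hj₁)
      (hq₂.takeUntil hi₂) with h | h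
    · exact hi₁ (q₁.support_takeUntil_subset_support hj₁ h)
    · exact hj₂ (q₂.support_takeUntil_subset_support hi₂ h)
  · exact hj₂ (by rw [P.getVert_of_length_le hj]; exact q₂.end_mem_support)

end IsAcyclic

end SimpleGraph

theorem Tx_Ty_disjoint_general
    {V : Type*} (H : Hypergraph' V) (F : Set V) (k : ℕ)
    (T : SimpleGraph ↥H.edges) (hT : H.IsJoinTree T)
    (hp : HeadPath H F k)
    (w : Fin (k + 1) → ↥H.edges)
    (P : T.Walk (w 0) (w (Fin.last k))) (hP : P.IsPath)
    (sepx sepy : ↥H.edges)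
    (ix : ℕ) (hix : ix < P.support.length)
    (hsepx : P.support.getD ix (w 0) = sepx)
    (hsepx_first : ∀ j, j < ix → hp.v 0 ∈ (P.support.getD j (w 0)).1)
    (iy : ℕ) (hiy : iy < P.support.length)
    (hsepy : P.support.getD iy (w 0) = sepy)
    (hsepy_last : ∀ j, iy < j → j < P.support.length →
      hp.v (Fin.last (k + 1)) ∈ (P.support.getD j (w 0)).1) :
    {n : ↥H.edges | ∀ q : T.Walk n (w 0), q.IsPath → sepx ∉ q.support} ∩
      {n : ↥H.edges | ∀ q : T.Walk n (w (Fin.last k)), q.IsPath → sepy ∉ q.support}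
      = ∅ := by
  classical
  rw [Set.eq_empty_iff_forall_notMem]
  rintro n ⟨hnx, hny⟩
  rcases lt_or_ge (iy + 1) ix with hlt | hle
  · exact hp.not_neighbors_first_last ⟨_, (P.support.getD (iy + 1) (w 0)).2,
      hsepx_first _ hlt, hsepy_last _ (Nat.lt_succ_self iy) (by omega)⟩
  obtain ⟨q₁, hq₁⟩ := hT.1.connected.preconnected.exists_isPath n (w 0)
  obtain ⟨q₂, hq₂⟩ := hT.1.connected.preconnected.exists_isPath n (w (Fin.last k))
  rw [P.getD_support hix] at hsepx
  rw [P.getD_support hiy] at hsepy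
  rcases hT.1.isAcyclic.getVert_mem_support_or_getVert_mem_support hP hq₁ hq₂ hle with h | h
  · exact hnx q₁ hq₁ (hsepx ▸ h)
  · exact hny q₂ hq₂ (hsepy ▸ h)

/-- With `P` the tree-path from `e(x,z_1)` to `e(z_k,y)`, `sep_x` the
first node on `P` not containing `x`, `sep_y` the last node on `P` not containing
`y`, `T_x` the nodes whose tree-path to `e(x,z_1)` avoids `sep_x` and `T_y` the
nodes whose tree-path to `e(z_k,y)` avoids `sep_y`, the sets `T_x` and `T_y` are
disjoint. -/
theorem Tx_Ty_disjoint
    {V : Type*} (H : Hypergraph' V) (F : Set V) (k : ℕ)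
    (T : SimpleGraph ↥H.edges) (hT : H.IsJoinTree T)
    (hp : HeadPath H F k)
    (w : Fin (k + 1) → ↥H.edges)
    (hw : ∀ i : Fin (k + 1), hp.v i.castSucc ∈ (w i).1 ∧ hp.v i.succ ∈ (w i).1)
    (P : T.Walk (w 0) (w (Fin.last k))) (hP : P.IsPath)
    (sepx sepy : ↥H.edges)
    (ix : ℕ) (hix : ix < P.support.length)
    (hsepx : P.support.getD ix (w 0) = sepx)
    (hsepx_nox : hp.v 0 ∉ sepx.1)
    (hsepx_first : ∀ j, j < ix → hp.v 0 ∈ (P.support.getD j (w 0)).1)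
    (iy : ℕ) (hiy : iy < P.support.length)
    (hsepy : P.support.getD iy (w 0) = sepy)
    (hsepy_noy : hp.v (Fin.last (k + 1)) ∉ sepy.1)
    (hsepy_last : ∀ j, iy < j → j < P.support.length →
      hp.v (Fin.last (k + 1)) ∈ (P.support.getD j (w 0)).1) :
    {n : ↥H.edges | ∀ q : T.Walk n (w 0), q.IsPath → sepx ∉ q.support} ∩
      {n : ↥H.edges | ∀ q : T.Walk n (w (Fin.last k)), q.IsPath → sepy ∉ q.support}
      = ∅ :=
  Tx_Ty_disjoint_general H F k T hT hp w P hP sepx sepy ix hix hsepx hsepx_first iy hiy hsepy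
    hsepy_last
end

section
/- Let T be a join tree of hypergraph H and let (x, z_1, ..., z_k, y) be a head-path with witnessing edges in T. With sep_x, sep_y, T_x, T_y defined as in the construction, every FD-like constraint U -> v of the form 'some node of T contains U union {v} and every node containing U contains v' with v occurring only in T_x satisfies: if no element of U occurs in a node of T_x, then every element of U is contained in sep_x, and hence v is contained in sep_x, contradiction. I.e., if v in V_x then U intersects V_x. -/
/-- Membership in the recursively defined set `V_x`: it contains `x`, and
whenever `U → v` is an FD with `v ∈ V_x`, it contains every `u ∈ U` that does
not occur in a node outside `T_x` (the set `Out`). -/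
inductive VxMem {Var : Type*} (Δ : Set (Set Var × Var)) (x : Var) (Out : Set Var) :
    Var → Prop
  | base : VxMem Δ x Out x
  | step (U : Set Var) (v u : Var) :
      (U, v) ∈ Δ → VxMem Δ x Out v → u ∈ U → u ∉ Out → VxMem Δ x Out u

/-!
If `v ∈ V_x` but no element of `U` is in `V_x`, then every `u ∈ U` occurs outside `T_x`
(otherwise the rule `U → v` would put `u` into `V_x`), and also in the witness node of
`U → v`, which lies inside `T_x` because it contains `v`. The tree path from an outside
node to an inside one passes through `sep`, so by running intersection `U ⊆ sep`. The
FD property then gives `v ∈ sep`, although `sep` lies outside `T_x` and `v` does not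
occur there.
-/

namespace SimpleGraph

variable {α : Type*} [DecidableEq α] {G : SimpleGraph α} {a b c s : α}

theorem IsAcyclic.support_subset_of_isPath (hG : G.IsAcyclic) {q : G.Walk a c}
    (hq : q.IsPath) (w : G.Walk a c) : q.support ⊆ w.support := by
  have hqw : q = w.bypass :=
    congrArg Subtype.val ((hG.subsingleton_path a c).elim ⟨q, hq⟩ ⟨_, w.bypass_isPath⟩)
  exact hqw ▸ w.support_bypass_subset_support

theorem IsAcyclic.mem_support_of_mem_support_of_notMem_support (hG : G.IsAcyclic)
    {q : G.Walk a c} (hq : q.IsPath) (hs : s ∈ q.support) {r : G.Walk b c}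
    (hr : s ∉ r.support) (w : G.Walk a b) : s ∈ w.support := by
  have hsw : s ∈ (w.append r).support := hG.support_subset_of_isPath hq _ hs
  exact ((Walk.mem_support_append_iff w r).mp hsw).resolve_right hr

end SimpleGraph

namespace Hypergraph'

variable {V : Type*} {H : Hypergraph' V} {T : SimpleGraph ↥H.edges}

theorem IsJoinTree.exists_walk_forall_mem (hT : H.IsJoinTree T) {u : V} {m n : ↥H.edges}
    (hm : u ∈ m.1) (hn : u ∈ n.1) : ∃ w : T.Walk m n, ∀ e ∈ w.support, u ∈ e.1 := by
  obtain ⟨w⟩ := hT.2 u (Set.mem_biUnion n.2 hn) ⟨m, hm⟩ ⟨n, hn⟩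
  let f := (SimpleGraph.Embedding.induce (G := T) {e : ↥H.edges | u ∈ e.1}).toHom
  refine ⟨w.map f, fun e he => ?_⟩
  obtain ⟨⟨e, hue⟩, -, rfl⟩ := List.mem_map.mp (w.support_map f ▸ he)
  exact hue

theorem IsJoinTree.mem_of_forall_mem_support (hT : H.IsJoinTree T) {m n s : ↥H.edges}
    (hs : ∀ w : T.Walk m n, s ∈ w.support) {u : V} (hm : u ∈ m.1) (hn : u ∈ n.1) :
    u ∈ s.1 := by
  obtain ⟨w, hw⟩ := hT.exists_walk_forall_mem hm hn
  exact hw s (hs w)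

end Hypergraph'

theorem VxMem.notMem {Var : Type*} {Δ : Set (Set Var × Var)} {x : Var} {Out : Set Var}
    (hx : x ∉ Out) {w : Var} (hw : VxMem Δ x Out w) : w ∉ Out := by
  cases hw with
  | base => exact hx
  | step _ _ _ _ _ _ hout => exact hout

theorem fd_left_side_meets_Vx_general
    {V : Type*} (H : Hypergraph' V) (T : SimpleGraph ↥H.edges)
    (hT : H.IsJoinTree T)
    (ex sep : ↥H.edges) (x : V)
    (Δ : Set (Set V × V))
    (hΔwit : ∀ U v, (U, v) ∈ Δ → ∃ n : ↥H.edges, U ⊆ n.1 ∧ v ∈ n.1)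
    (hΔclosed : ∀ U v, (U, v) ∈ Δ → ∀ n : ↥H.edges, U ⊆ n.1 → v ∈ n.1)
    (Tx : Set ↥H.edges)
    (hTx : Tx = {n : ↥H.edges | ∀ q : T.Walk n ex, q.IsPath → sep ∉ q.support})
    (Out : Set V)
    (hOut : Out = {u : V | ∃ n : ↥H.edges, n ∉ Tx ∧ u ∈ n.1})
    (hxOut : x ∉ Out) :
    ∀ U v, (U, v) ∈ Δ → VxMem Δ x Out v → ∃ u ∈ U, VxMem Δ x Out u := by
  classical
  subst hTx hOut
  intro U v hUv hv
  have hvOut := hv.notMem hxOut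
  by_contra! hU
  obtain ⟨n, hUn, hvn⟩ := hΔwit U v hUv
  have hnTx : ∀ q : T.Walk n ex, q.IsPath → sep ∉ q.support := by
    by_contra h
    exact hvOut ⟨n, h, hvn⟩
  have hsepTx : ¬ ∀ q : T.Walk sep ex, q.IsPath → sep ∉ q.support := fun h =>
    let ⟨q⟩ := hT.1.connected.preconnected sep ex
    h q.bypass q.bypass_isPath q.bypass.start_mem_support
  obtain ⟨r⟩ := hT.1.connected.preconnected n ex
  have hUsep : U ⊆ sep.1 := by
    intro u hu
    obtain ⟨m, hmTx, hum⟩ : ∃ m : ↥H.edges, _ ∧ u ∈ m.1 := by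
      by_contra h
      exact hU u hu (.step U v u hUv hv hu h)
    obtain ⟨q, hq, hsq⟩ : ∃ q : T.Walk m ex, q.IsPath ∧ sep ∈ q.support := by
      simpa using hmTx
    exact hT.mem_of_forall_mem_support
      (hT.1.isAcyclic.mem_support_of_mem_support_of_notMem_support hq hsq
        (hnTx _ r.bypass_isPath)) hum (hUn hu)
  exact hvOut ⟨sep, hsepTx, hΔclosed U v hUv sep hUsep⟩

/-- In the setting of the reduction-sets lemma: `T` is a join tree,
`ex` a node containing `x`, `sep` a node not containing `x`, `T_x` the set of
nodes whose tree-path to `ex` avoids `sep`, and `Out` the set of variables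
occurring in some node outside `T_x` (with `x ∉ Out`). For the FD-like
constraints of `Δ` (each `U → v` witnessed by a node containing `U ∪ {v}`, with
every node containing `U` containing `v`): if `v ∈ V_x`, then `U` intersects
`V_x`. -/
theorem fd_left_side_meets_Vx
    {V : Type*} (H : Hypergraph' V) (T : SimpleGraph ↥H.edges)
    (hT : H.IsJoinTree T)
    (ex sep : ↥H.edges) (x : V) (hx : x ∈ ex.1) (hsep : x ∉ sep.1)
    (Δ : Set (Set V × V))
    (hΔwit : ∀ U v, (U, v) ∈ Δ → ∃ n : ↥H.edges, U ⊆ n.1 ∧ v ∈ n.1)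
    (hΔclosed : ∀ U v, (U, v) ∈ Δ → ∀ n : ↥H.edges, U ⊆ n.1 → v ∈ n.1)
    (hΔne : ∀ U v, (U, v) ∈ Δ → U.Nonempty)
    (Tx : Set ↥H.edges)
    (hTx : Tx = {n : ↥H.edges | ∀ q : T.Walk n ex, q.IsPath → sep ∉ q.support})
    (Out : Set V)
    (hOut : Out = {u : V | ∃ n : ↥H.edges, n ∉ Tx ∧ u ∈ n.1})
    (hxOut : x ∉ Out) :
    ∀ U v, (U, v) ∈ Δ → VxMem Δ x Out v → ∃ u ∈ U, VxMem Δ x Out u :=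
  fd_left_side_meets_Vx_general H T hT ex sep x Δ hΔwit hΔclosed Tx hTx Out hOut hxOut
end
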